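/- arXiv:2309.15184 — 3 statements merged into one kernel-verified Lean document; each statement's English description precedes it below -/
import Mathlib

section
/- Let d be an odd prime. Suppose Φ₁, Φ₂, Φ₃, Φ₄ are symmetric 2×2 matrices over ZMod d with Φ₁ = 0, and p₁,…,p₄, q₁,…,q₄ ∈ (ZMod d)² satisfy, for all 1 ≤ i < j ≤ 4: (i) Φ_i · q_j = Φ_j · q_i (equality of vectors), and (ii) q_iᵀ Φ_j q_i − q_jᵀ Φ_i q_j + p_i · q_j − p_j · q_i = c_{ij}, where c_{12} = c_{34} = 1 and c_{ij} = 0 for all other pairs (i,j). Then the following three equations hold: (Φ₃)₁₁(Φ₄)₂₂ − (Φ₃)₂₂(Φ₄)₁₁ = 0, (Φ₃)₁₁(Φ₄)₁₂ − (Φ₃)₁₂(Φ₄)₁₁ = 0, and (Φ₃)₂₂(Φ₄)₁₂ − (Φ₃)₁₂(Φ₄)₂₂ = 0. -/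
open Matrix

private lemma cancel_left {K : Type*} [Field K] {α M : K} (h : α * M = 0) (hα : α ≠ 0) :
    M = 0 := by
  rcases mul_eq_zero.mp h with h' | h'
  · exact absurd h' hα
  · exact h'

/-- Two symmetric 2×2 matrices with a common nonzero kernel vector have
proportional entries: all three minors vanish. -/
private lemma aux_ker {K : Type*} [Field K] {a b c d e f x y : K}
    (h1 : a * x + b * y = 0) (h2 : b * x + c * y = 0)
    (h3 : d * x + e * y = 0) (h4 : e * x + f * y = 0)
    (hxy : ¬(x = 0 ∧ y = 0)) :
    a * f - c * d = 0 ∧ a * e - b * d = 0 ∧ c * e - b * f = 0 := by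
  by_cases hx : x = 0
  · have hy : y ≠ 0 := fun hy => hxy ⟨hx, hy⟩
    have hb : b = 0 := by
      have := h1; rw [hx] at this; simpa [mul_eq_zero, hy] using this
    have hc : c = 0 := by
      have := h2; rw [hx] at this; simpa [mul_eq_zero, hy] using this
    have he : e = 0 := by
      have := h3; rw [hx] at this; simpa [mul_eq_zero, hy] using this
    have hf : f = 0 := by
      have := h4; rw [hx] at this; simpa [mul_eq_zero, hy] using this
    refine ⟨?_, ?_, ?_⟩ <;> simp [hb, hc, he, hf]
  · by_cases hy : y = 0
    · have ha : a = 0 := by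
        have := h1; rw [hy] at this; simpa [mul_eq_zero, hx] using this
      have hb : b = 0 := by
        have := h2; rw [hy] at this; simpa [mul_eq_zero, hx] using this
      have hd : d = 0 := by
        have := h3; rw [hy] at this; simpa [mul_eq_zero, hx] using this
      have he : e = 0 := by
        have := h4; rw [hy] at this; simpa [mul_eq_zero, hx] using this
      refine ⟨?_, ?_, ?_⟩ <;> simp [ha, hb, hd, he]
    · have m1 : x * y * (a * f - c * d) = 0 := by
        linear_combination (f * y) * h1 - (b * y) * h4 + (b * x) * h3 - (d * x) * h2
      have m2 : x * y * (a * e - b * d) = 0 := by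
        linear_combination (e * y) * h1 - (b * y) * h3
      have m3 : x * y * (c * e - b * f) = 0 := by
        linear_combination (e * x) * h2 - (b * x) * h4
      have hxy' : x * y ≠ 0 := mul_ne_zero hx hy
      exact ⟨cancel_left m1 hxy', cancel_left m2 hxy', cancel_left m3 hxy'⟩

/-- A vector orthogonal to a nonzero vector `(P, Q)` in the plane is a multiple of
`(-Q, P)`. -/
private lemma perp_aux {K : Type*} [Field K] {P Q s t : K}
    (h : P * s + Q * t = 0) (hPQ : ¬(P = 0 ∧ Q = 0)) :
    ∃ α : K, s = -(α * Q) ∧ t = α * P := by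
  by_cases hP : P = 0
  · have hQ : Q ≠ 0 := fun hQ => hPQ ⟨hP, hQ⟩
    have ht : t = 0 := by
      have := h; rw [hP] at this; simpa [mul_eq_zero, hQ] using this
    refine ⟨-(s / Q), ?_, ?_⟩
    · field_simp
    · simp [hP, ht]
  · refine ⟨t / P, ?_, ?_⟩
    · field_simp
      linear_combination h
    · field_simp

/-- If symmetric 2×2 matrices `Φ₁,…,Φ₄` over `ZMod d` (with `Φ₁ = 0`) and vectors
`p_i, q_i` satisfy the defining equations of simplified two-qudit third-level gates,
then the three semi-Clifford minor equations hold. -/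
theorem stmt1 (d : ℕ) (hp : Nat.Prime d) (hodd : Odd d)
    (Φ : Fin 4 → Matrix (Fin 2) (Fin 2) (ZMod d)) (hsymm : ∀ i, (Φ i).IsSymm)
    (hΦ1 : Φ 0 = 0)
    (p q : Fin 4 → Fin 2 → ZMod d)
    (h1 : ∀ i j : Fin 4, i < j → (Φ i) *ᵥ (q j) = (Φ j) *ᵥ (q i))
    (h2 : ∀ i j : Fin 4, i < j →
      q i ⬝ᵥ ((Φ j) *ᵥ q i) - q j ⬝ᵥ ((Φ i) *ᵥ q j) + p i ⬝ᵥ q j - p j ⬝ᵥ q i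
        = if (i = 0 ∧ j = 1) ∨ (i = 2 ∧ j = 3) then 1 else 0) :
    (Φ 2) 0 0 * (Φ 3) 1 1 - (Φ 2) 1 1 * (Φ 3) 0 0 = 0 ∧
    (Φ 2) 0 0 * (Φ 3) 0 1 - (Φ 2) 0 1 * (Φ 3) 0 0 = 0 ∧
    (Φ 2) 1 1 * (Φ 3) 0 1 - (Φ 2) 0 1 * (Φ 3) 1 1 = 0 := by
  haveI : Fact d.Prime := ⟨hp⟩
  have hs2 : (Φ 2) 1 0 = (Φ 2) 0 1 := (hsymm 2).apply 0 1
  have hs3 : (Φ 3) 1 0 = (Φ 3) 0 1 := (hsymm 3).apply 0 1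
  by_cases hq0 : q 0 0 = 0 ∧ q 0 1 = 0
  · -- Case B : q₀ = 0
    obtain ⟨hq00, hq01⟩ := hq0
    -- scalar equations from h2 0 j
    have E01 : p 0 0 * q 1 0 + p 0 1 * q 1 1 = 1 := by
      have h := h2 0 1 (by decide)
      rw [if_pos (by decide)] at h
      simp [Matrix.mulVec, dotProduct, Fin.sum_univ_two, hΦ1, hq00, hq01] at h
      linear_combination h
    have E02 : p 0 0 * q 2 0 + p 0 1 * q 2 1 = 0 := by
      have h := h2 0 2 (by decide)
      rw [if_neg (by decide)] at h
      simp [Matrix.mulVec, dotProduct, Fin.sum_univ_two, hΦ1, hq00, hq01] at h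
      linear_combination h
    have E03 : p 0 0 * q 3 0 + p 0 1 * q 3 1 = 0 := by
      have h := h2 0 3 (by decide)
      rw [if_neg (by decide)] at h
      simp [Matrix.mulVec, dotProduct, Fin.sum_univ_two, hΦ1, hq00, hq01] at h
      linear_combination h
    have hPQ : ¬(p 0 0 = 0 ∧ p 0 1 = 0) := by
      rintro ⟨h1', h2'⟩
      rw [h1', h2'] at E01
      simp at E01
    obtain ⟨α, hqs, hqt⟩ := perp_aux E02 hPQ
    obtain ⟨β, hqu, hqv⟩ := perp_aux E03 hPQ
    -- vector equations
    have V12a : (Φ 1) 0 0 * q 2 0 + (Φ 1) 0 1 * q 2 1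
        = (Φ 2) 0 0 * q 1 0 + (Φ 2) 0 1 * q 1 1 := by
      have h := congrFun (h1 1 2 (by decide)) 0
      simp [Matrix.mulVec, dotProduct, Fin.sum_univ_two] at h
      linear_combination h
    have V12b : (Φ 1) 1 0 * q 2 0 + (Φ 1) 1 1 * q 2 1
        = (Φ 2) 0 1 * q 1 0 + (Φ 2) 1 1 * q 1 1 := by
      have h := congrFun (h1 1 2 (by decide)) 1
      simp [Matrix.mulVec, dotProduct, Fin.sum_univ_two, hs2] at h
      linear_combination h
    have V13a : (Φ 1) 0 0 * q 3 0 + (Φ 1) 0 1 * q 3 1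
        = (Φ 3) 0 0 * q 1 0 + (Φ 3) 0 1 * q 1 1 := by
      have h := congrFun (h1 1 3 (by decide)) 0
      simp [Matrix.mulVec, dotProduct, Fin.sum_univ_two] at h
      linear_combination h
    have V13b : (Φ 1) 1 0 * q 3 0 + (Φ 1) 1 1 * q 3 1
        = (Φ 3) 0 1 * q 1 0 + (Φ 3) 1 1 * q 1 1 := by
      have h := congrFun (h1 1 3 (by decide)) 1
      simp [Matrix.mulVec, dotProduct, Fin.sum_univ_two, hs3] at h
      linear_combination h
    have V23a : (Φ 2) 0 0 * q 3 0 + (Φ 2) 0 1 * q 3 1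
        = (Φ 3) 0 0 * q 2 0 + (Φ 3) 0 1 * q 2 1 := by
      have h := congrFun (h1 2 3 (by decide)) 0
      simp [Matrix.mulVec, dotProduct, Fin.sum_univ_two] at h
      linear_combination h
    have V23b : (Φ 2) 0 1 * q 3 0 + (Φ 2) 1 1 * q 3 1
        = (Φ 3) 0 1 * q 2 0 + (Φ 3) 1 1 * q 2 1 := by
      have h := congrFun (h1 2 3 (by decide)) 1
      simp [Matrix.mulVec, dotProduct, Fin.sum_univ_two, hs2, hs3] at h
      linear_combination h
    -- the case q₂ = q₃ = 0 contradicts `h2 2 3`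
    have hαβ : ¬(α = 0 ∧ β = 0) := by
      rintro ⟨hα0, hβ0⟩
      rw [hα0] at hqs hqt
      rw [hβ0] at hqu hqv
      simp only [zero_mul, neg_zero] at hqs hqt hqu hqv
      have h := h2 2 3 (by decide)
      rw [if_pos (by decide)] at h
      simp [Matrix.mulVec, dotProduct, Fin.sum_univ_two, hqs, hqt, hqu, hqv] at h
    -- substitute q₂ = α·(-Q,P), q₃ = β·(-Q,P)
    rw [hqs, hqt] at V12a V12b V23a V23b
    rw [hqu, hqv] at V13a V13b V23a V23b
    -- eliminate Φ₁
    have hiii : q 1 0 * (β * (Φ 2) 0 0 - α * (Φ 3) 0 0)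
        + q 1 1 * (β * (Φ 2) 0 1 - α * (Φ 3) 0 1) = 0 := by
      linear_combination α * V13a - β * V12a
    have hiv : q 1 0 * (β * (Φ 2) 0 1 - α * (Φ 3) 0 1)
        + q 1 1 * (β * (Φ 2) 1 1 - α * (Φ 3) 1 1) = 0 := by
      linear_combination α * V13b - β * V12b
    -- proportionality β·Φ₂ = α·Φ₃
    have hA : β * (Φ 2) 0 0 - α * (Φ 3) 0 0 = 0 := by
      linear_combination p 0 0 * hiii - q 1 1 * V23a
        - (β * (Φ 2) 0 0 - α * (Φ 3) 0 0) * E01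
    have hB : β * (Φ 2) 0 1 - α * (Φ 3) 0 1 = 0 := by
      linear_combination p 0 1 * hiii + q 1 0 * V23a
        - (β * (Φ 2) 0 1 - α * (Φ 3) 0 1) * E01
    have hC : β * (Φ 2) 1 1 - α * (Φ 3) 1 1 = 0 := by
      linear_combination p 0 1 * hiv + q 1 0 * V23b
        - (β * (Φ 2) 1 1 - α * (Φ 3) 1 1) * E01
    -- conclude the minors vanish
    refine ⟨?_, ?_, ?_⟩
    · by_cases hα : α = 0
      · have hβ : β ≠ 0 := fun h => hαβ ⟨hα, h⟩
        exact cancel_left (show β * ((Φ 2) 0 0 * (Φ 3) 1 1 - (Φ 2) 1 1 * (Φ 3) 0 0) = 0 by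
          linear_combination (Φ 3) 1 1 * hA - (Φ 3) 0 0 * hC) hβ
      · exact cancel_left (show α * ((Φ 2) 0 0 * (Φ 3) 1 1 - (Φ 2) 1 1 * (Φ 3) 0 0) = 0 by
          linear_combination (Φ 2) 1 1 * hA - (Φ 2) 0 0 * hC) hα
    · by_cases hα : α = 0
      · have hβ : β ≠ 0 := fun h => hαβ ⟨hα, h⟩
        exact cancel_left (show β * ((Φ 2) 0 0 * (Φ 3) 0 1 - (Φ 2) 0 1 * (Φ 3) 0 0) = 0 by
          linear_combination (Φ 3) 0 1 * hA - (Φ 3) 0 0 * hB) hβ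
      · exact cancel_left (show α * ((Φ 2) 0 0 * (Φ 3) 0 1 - (Φ 2) 0 1 * (Φ 3) 0 0) = 0 by
          linear_combination (Φ 2) 0 1 * hA - (Φ 2) 0 0 * hB) hα
    · by_cases hα : α = 0
      · have hβ : β ≠ 0 := fun h => hαβ ⟨hα, h⟩
        exact cancel_left (show β * ((Φ 2) 1 1 * (Φ 3) 0 1 - (Φ 2) 0 1 * (Φ 3) 1 1) = 0 by
          linear_combination (Φ 3) 0 1 * hC - (Φ 3) 1 1 * hB) hβ
      · exact cancel_left (show α * ((Φ 2) 1 1 * (Φ 3) 0 1 - (Φ 2) 0 1 * (Φ 3) 1 1) = 0 by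
          linear_combination (Φ 2) 0 1 * hC - (Φ 2) 1 1 * hB) hα
  · -- Case A : q₀ ≠ 0, so Φ₂ and Φ₃ have a common nonzero kernel vector
    have e1 : (Φ 2) 0 0 * q 0 0 + (Φ 2) 0 1 * q 0 1 = 0 := by
      have h := congrFun (h1 0 2 (by decide)) 0
      simp [Matrix.mulVec, dotProduct, Fin.sum_univ_two, hΦ1] at h
      linear_combination -h
    have e2 : (Φ 2) 0 1 * q 0 0 + (Φ 2) 1 1 * q 0 1 = 0 := by
      have h := congrFun (h1 0 2 (by decide)) 1
      simp [Matrix.mulVec, dotProduct, Fin.sum_univ_two, hΦ1, hs2] at h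
      linear_combination -h
    have e3 : (Φ 3) 0 0 * q 0 0 + (Φ 3) 0 1 * q 0 1 = 0 := by
      have h := congrFun (h1 0 3 (by decide)) 0
      simp [Matrix.mulVec, dotProduct, Fin.sum_univ_two, hΦ1] at h
      linear_combination -h
    have e4 : (Φ 3) 0 1 * q 0 0 + (Φ 3) 1 1 * q 0 1 = 0 := by
      have h := congrFun (h1 0 3 (by decide)) 1
      simp [Matrix.mulVec, dotProduct, Fin.sum_univ_two, hΦ1, hs3] at h
      linear_combination -h
    exact aux_ker e1 e2 e3 e4 hq0
end

section
/- Let d be an odd prime and let M be a 3×4 matrix over ZMod d whose first column is zero. Then the kernel of M, as a subspace of (ZMod d)^4, contains a Lagrangian semibasis (two linearly independent vectors u, v with [u,v] = 0) if and only if all three 2×2 minors of the last two columns of M vanish, i.e. M₁₃M₂₄ − M₂₃M₁₄ = 0, M₁₃M₃₄ − M₃₃M₁₄ = 0, and M₂₃M₃₄ − M₃₃M₂₄ = 0 (rows indexed 1..3, columns 1..4). -/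
open Matrix

/-- The symplectic product on `(ZMod d)⁴`. -/
def symp4 (d : ℕ) (u v : Fin 4 → ZMod d) : ZMod d :=
  u 0 * v 1 - u 1 * v 0 + u 2 * v 3 - u 3 * v 2

lemma key_contra {d : ℕ} [Fact (Nat.Prime d)]
    (M : Matrix (Fin 3) (Fin 4) (ZMod d)) (h0 : ∀ r, M r 0 = 0)
    (i j : Fin 3) (hm : M i 2 * M j 3 - M j 2 * M i 3 ≠ 0)
    (u v : Fin 4 → ZMod d) (hu : M *ᵥ u = 0) (hv : M *ᵥ v = 0)
    (hind : LinearIndependent (ZMod d) ![u, v]) (hsymp : symp4 d u v = 0) : False := by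
  have eu : ∀ r, M r 1 * u 1 + M r 2 * u 2 + M r 3 * u 3 = 0 := by
    intro r
    have h := congrFun hu r
    simp only [mulVec, dotProduct, Fin.sum_univ_four, Pi.zero_apply] at h
    linear_combination h - u 0 * h0 r
  have ev : ∀ r, M r 1 * v 1 + M r 2 * v 2 + M r 3 * v 3 = 0 := by
    intro r
    have h := congrFun hv r
    simp only [mulVec, dotProduct, Fin.sum_univ_four, Pi.zero_apply] at h
    linear_combination h - v 0 * h0 r
  have inj : ∀ a b : ZMod d, a * M i 2 + b * M i 3 = 0 → a * M j 2 + b * M j 3 = 0 →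
      a = 0 ∧ b = 0 := by
    intro a b h1 h2
    have ha : a * (M i 2 * M j 3 - M j 2 * M i 3) = 0 := by
      linear_combination M j 3 * h1 - M i 3 * h2
    have hb : b * (M i 2 * M j 3 - M j 2 * M i 3) = 0 := by
      linear_combination M i 2 * h2 - M j 2 * h1
    exact ⟨(mul_eq_zero.mp ha).resolve_right hm, (mul_eq_zero.mp hb).resolve_right hm⟩
  have key1 : ∀ r, (v 1 * u 2 - u 1 * v 2) * M r 2 + (v 1 * u 3 - u 1 * v 3) * M r 3 = 0 := by
    intro r; linear_combination v 1 * eu r - u 1 * ev r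
  obtain ⟨ha, hb⟩ := inj _ _ (key1 i) (key1 j)
  have hdep : ∀ s t : ZMod d, s * u 0 + t * v 0 = 0 → s * u 1 + t * v 1 = 0 →
      s * u 2 + t * v 2 = 0 → s * u 3 + t * v 3 = 0 → s = 0 ∧ t = 0 := by
    intro s t e0 e1 e2 e3
    have h' := Fintype.linearIndependent_iff.mp hind ![s, t] (by
      funext k
      simp only [Fin.sum_univ_two, Matrix.cons_val_zero, Matrix.cons_val_one, Matrix.head_cons,
        Pi.add_apply, Pi.smul_apply, smul_eq_mul, Pi.zero_apply]
      fin_cases k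
      · exact e0
      · exact e1
      · exact e2
      · exact e3)
    exact ⟨h' 0, h' 1⟩
  by_cases huv : u 1 = 0 ∧ v 1 = 0
  · obtain ⟨hu1, hv1⟩ := huv
    obtain ⟨hu2, hu3⟩ := inj (u 2) (u 3)
      (by linear_combination eu i - M i 1 * hu1) (by linear_combination eu j - M j 1 * hu1)
    obtain ⟨hv2, hv3⟩ := inj (v 2) (v 3)
      (by linear_combination ev i - M i 1 * hv1) (by linear_combination ev j - M j 1 * hv1)
    obtain ⟨hv0, hu0⟩ := hdep (v 0) (-(u 0)) (by ring)
      (by linear_combination v 0 * hu1 - u 0 * hv1)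
      (by linear_combination v 0 * hu2 - u 0 * hv2)
      (by linear_combination v 0 * hu3 - u 0 * hv3)
    have hu0' : u 0 = 0 := by linear_combination -hu0
    obtain ⟨h1, -⟩ := hdep 1 0 (by linear_combination hu0') (by linear_combination hu1)
      (by linear_combination hu2) (by linear_combination hu3)
    exact one_ne_zero h1
  · have h2 : u 2 * v 3 - u 3 * v 2 = 0 := by
      by_cases hu1 : u 1 = 0
      · have hv1 : v 1 ≠ 0 := fun hv1 => huv ⟨hu1, hv1⟩
        have hz : v 1 * (u 2 * v 3 - u 3 * v 2) = 0 := by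
          linear_combination v 3 * ha - v 2 * hb
        exact (mul_eq_zero.mp hz).resolve_left hv1
      · have hz : u 1 * (u 2 * v 3 - u 3 * v 2) = 0 := by
          linear_combination u 3 * ha - u 2 * hb
        exact (mul_eq_zero.mp hz).resolve_left hu1
    have hsymp' : u 0 * v 1 - u 1 * v 0 + u 2 * v 3 - u 3 * v 2 = 0 := hsymp
    have h3 : v 1 * u 0 - u 1 * v 0 = 0 := by linear_combination hsymp' - h2
    obtain ⟨hv1z, hu1z⟩ := hdep (v 1) (-(u 1)) (by linear_combination h3) (by ring)
      (by linear_combination ha) (by linear_combination hb)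
    exact huv ⟨by linear_combination -hu1z, hv1z⟩

/-- For a 3×4 matrix `M` over `ZMod d` with zero first column, the kernel of `M`
contains a Lagrangian semibasis iff all three 2×2 minors of the last two columns
of `M` vanish. -/
theorem stmt2 (d : ℕ) (hp : Nat.Prime d) (hodd : Odd d)
    (M : Matrix (Fin 3) (Fin 4) (ZMod d)) (h0 : ∀ r, M r 0 = 0) :
    (∃ u v : Fin 4 → ZMod d, M *ᵥ u = 0 ∧ M *ᵥ v = 0 ∧
        LinearIndependent (ZMod d) ![u, v] ∧ symp4 d u v = 0) ↔
    (M 0 2 * M 1 3 - M 1 2 * M 0 3 = 0 ∧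
     M 0 2 * M 2 3 - M 2 2 * M 0 3 = 0 ∧
     M 1 2 * M 2 3 - M 2 2 * M 1 3 = 0) := by
  haveI : Fact (Nat.Prime d) := ⟨hp⟩
  constructor
  · rintro ⟨u, v, hu, hv, hind, hsymp⟩
    refine ⟨?_, ?_, ?_⟩
    · by_contra hm; exact key_contra M h0 0 1 hm u v hu hv hind hsymp
    · by_contra hm; exact key_contra M h0 0 2 hm u v hu hv hind hsymp
    · by_contra hm; exact key_contra M h0 1 2 hm u v hu hv hind hsymp
  · rintro ⟨m1, m2, m3⟩
    have minor : ∀ r s : Fin 3, M r 2 * M s 3 - M s 2 * M r 3 = 0 := by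
      intro r s
      fin_cases r <;> fin_cases s <;>
        simp only [Fin.zero_eta, Fin.mk_one, Fin.reduceFinMk] <;>
        first
          | ring1
          | linear_combination m1
          | linear_combination -m1
          | linear_combination m2
          | linear_combination -m2
          | linear_combination m3
          | linear_combination -m3
    refine ⟨![1, 0, 0, 0], ?_⟩
    by_cases hc : ∀ r, M r 2 = 0
    · refine ⟨![0, 0, 1, 0], ?_, ?_, ?_, ?_⟩
      · funext r
        simp only [mulVec, dotProduct, Fin.sum_univ_four, Pi.zero_apply]
        simp [h0 r]
      · funext r
        simp only [mulVec, dotProduct, Fin.sum_univ_four, Pi.zero_apply]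
        simp [hc r]
      · rw [linearIndependent_fin2]
        constructor
        · intro h
          have := congrFun h 2
          simp at this
        · intro a h
          have := congrFun h 0
          simp at this
      · simp [symp4]
    · push_neg at hc
      obtain ⟨r, hr⟩ := hc
      refine ⟨![0, 0, M r 3, -(M r 2)], ?_, ?_, ?_, ?_⟩
      · funext s
        simp only [mulVec, dotProduct, Fin.sum_univ_four, Pi.zero_apply]
        simp [h0 s]
      · funext s
        simp only [mulVec, dotProduct, Fin.sum_univ_four, Pi.zero_apply]
        simp only [Matrix.cons_val_zero, Matrix.cons_val_one, Matrix.head_cons,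
          Matrix.cons_val_two, Matrix.tail_cons, Matrix.cons_val_three]
        linear_combination minor s r
      · rw [linearIndependent_fin2]
        constructor
        · intro h
          have := congrFun h 3
          simp only [Pi.zero_apply] at this
          exact hr (by simpa using (neg_eq_zero.mp (by simpa using this)))
        · intro a h
          have := congrFun h 0
          simp at this
      · simp [symp4]
end

section
/- Let d be an odd prime and n ∈ ℕ. For any symmetric n×n matrices Φ₁, Φ₂ over ZMod d and any Pauli gates P₁, P₂ ∈ C_1^n, there exists a Pauli gate P ∈ C_1^n such that (D_{Φ₁}P₁)·(D_{Φ₂}P₂) = D_{Φ₁+Φ₂}·P. -/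
open Matrix

noncomputable section

/-- The space of `n`-qudit gates: `d^n × d^n` complex matrices indexed by `(ZMod d)^n`. -/
abbrev Mat (d n : ℕ) := Matrix (Fin n → ZMod d) (Fin n → ZMod d) ℂ

/-- The primitive `d`-th root of unity `ω = exp(2πi/d)`. -/
def omega (d : ℕ) : ℂ := Complex.exp (2 * Real.pi * Complex.I / d)

/-- `ω` raised to the canonical integer lift of `c : ZMod d`. -/
def omegaPow (d : ℕ) (c : ZMod d) : ℂ := omega d ^ c.val

/-- The Pauli gate `Z^p`, acting by `Z^p |z⟩ = ω^(p·z) |z⟩`. -/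
def ZP (d n : ℕ) [NeZero d] (p : Fin n → ZMod d) : Mat d n :=
  Matrix.diagonal fun z => omegaPow d (p ⬝ᵥ z)

/-- The Pauli gate `X^q`, acting by `X^q |z⟩ = |z + q⟩`. -/
def XQ (d n : ℕ) [NeZero d] (q : Fin n → ZMod d) : Mat d n :=
  Matrix.of fun z' z => if z' = z + q then 1 else 0

/-- The basic Pauli gate `Z_i`. -/
def Zi (d n : ℕ) [NeZero d] (i : Fin n) : Mat d n := ZP d n (Pi.single i 1)

/-- The basic Pauli gate `X_i`. -/
def Xi (d n : ℕ) [NeZero d] (i : Fin n) : Mat d n := XQ d n (Pi.single i 1)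

/-- The Pauli group `C_1^n`. -/
def Pauli (d n : ℕ) [NeZero d] : Set (Mat d n) :=
  { M | ∃ (c : ZMod d) (p q : Fin n → ZMod d), M = omegaPow d c • (ZP d n p * XQ d n q) }

/-- The Clifford group `C_2^n`. -/
def Clifford (d n : ℕ) [NeZero d] : Set (Mat d n) :=
  { C | C ∈ Matrix.unitaryGroup (Fin n → ZMod d) ℂ ∧ ∀ P ∈ Pauli d n, C * P * Cᴴ ∈ Pauli d n }

/-- The third level `C_3^n` of the Clifford hierarchy. -/
def Third (d n : ℕ) [NeZero d] : Set (Mat d n) :=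
  { G | G ∈ Matrix.unitaryGroup (Fin n → ZMod d) ℂ ∧ ∀ P ∈ Pauli d n, G * P * Gᴴ ∈ Clifford d n }

/-- The quadratic diagonal gate `D_Φ |z⟩ = ω^(zᵀ Φ z) |z⟩`. -/
def quadGate (d n : ℕ) [NeZero d] (Φ : Matrix (Fin n) (Fin n) (ZMod d)) : Mat d n :=
  Matrix.diagonal fun z => omegaPow d (z ⬝ᵥ (Φ *ᵥ z))

/-- A gate is semi-Clifford if it is `C₁ D C₂` for Cliffords `C₁, C₂` and a
diagonal third-level gate `D`. -/
def SemiClifford (d n : ℕ) [NeZero d] (G : Mat d n) : Prop :=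
  ∃ C₁ ∈ Clifford d n, ∃ C₂ ∈ Clifford d n, ∃ D ∈ Third d n, D.IsDiag ∧ G = C₁ * D * C₂

/-- A Clifford gate is almost diagonal if it is `D_Φ P` for symmetric `Φ` and Pauli `P`. -/
def AlmostDiag (d n : ℕ) [NeZero d] (M : Mat d n) : Prop :=
  ∃ Φ : Matrix (Fin n) (Fin n) (ZMod d), Φ.IsSymm ∧ ∃ P ∈ Pauli d n, M = quadGate d n Φ * P

/-- A third-level gate is simplified if its conjugate tuple consists of
almost diagonal Clifford gates. -/
def Simplified (d n : ℕ) [NeZero d] (G : Mat d n) : Prop :=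
  ∀ i : Fin n, AlmostDiag d n (G * Zi d n i * Gᴴ) ∧ AlmostDiag d n (G * Xi d n i * Gᴴ)

section Aux

variable (d n : ℕ) [NeZero d]

lemma omega_pow_self : omega d ^ d = 1 := by
  have hd : (d : ℂ) ≠ 0 := Nat.cast_ne_zero.mpr (NeZero.ne d)
  rw [omega, ← Complex.exp_nat_mul]
  rw [show (d : ℂ) * (2 * Real.pi * Complex.I / d) = 2 * Real.pi * Complex.I by
    field_simp]
  exact Complex.exp_two_pi_mul_I

lemma omega_pow_mod (m : ℕ) : omega d ^ (m % d) = omega d ^ m := by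
  conv_rhs => rw [← Nat.div_add_mod m d]
  rw [pow_add, pow_mul, omega_pow_self, one_pow, one_mul]

lemma omegaPow_add (a b : ZMod d) :
    omegaPow d (a + b) = omegaPow d a * omegaPow d b := by
  rw [omegaPow, omegaPow, omegaPow, ZMod.val_add, omega_pow_mod, pow_add]

lemma omegaPow_zero : omegaPow d (0 : ZMod d) = 1 := by
  simp [omegaPow, ZMod.val_zero]

lemma XQ_zero : XQ d n 0 = 1 := by
  ext z' z
  simp [XQ, Matrix.one_apply, eq_comm]

lemma ZP_zero : ZP d n 0 = 1 := by
  rw [ZP]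
  simp [zero_dotProduct, omegaPow_zero, Matrix.diagonal_one]

lemma XQ_mem_Pauli (q : Fin n → ZMod d) : XQ d n q ∈ Pauli d n :=
  ⟨0, 0, q, by rw [omegaPow_zero, ZP_zero, one_mul, one_smul]⟩

lemma ZP_mul_ZP (p p' : Fin n → ZMod d) :
    ZP d n p * ZP d n p' = ZP d n (p + p') := by
  rw [ZP, ZP, ZP, Matrix.diagonal_mul_diagonal]
  congr 1
  funext z
  simp [add_dotProduct, omegaPow_add]

lemma XQ_mul_XQ (q q' : Fin n → ZMod d) :
    XQ d n q * XQ d n q' = XQ d n (q + q') := by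
  ext z' z
  simp only [XQ, Matrix.mul_apply, Matrix.of_apply, ite_mul, one_mul, zero_mul,
    mul_ite, mul_one, mul_zero]
  rw [Finset.sum_ite_eq' Finset.univ (z + q') (fun y => if z' = y + q then (1:ℂ) else 0)]
  simp [add_assoc, add_comm q' q]

lemma XQ_mul_ZP (q p : Fin n → ZMod d) :
    XQ d n q * ZP d n p = omegaPow d (-(p ⬝ᵥ q)) • (ZP d n p * XQ d n q) := by
  ext z' z
  simp only [XQ, ZP, Matrix.mul_diagonal, Matrix.diagonal_mul, Matrix.of_apply,
    Matrix.smul_apply, smul_eq_mul]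
  by_cases h : z' = z + q
  · subst h
    simp only [if_pos rfl, if_true, mul_one, one_mul]
    rw [← omegaPow_add]
    congr 1
    rw [dotProduct_add]
    ring
  · simp [h]

lemma Pauli_smul {P : Mat d n} (c : ZMod d) (h : P ∈ Pauli d n) :
    omegaPow d c • P ∈ Pauli d n := by
  obtain ⟨c', p, q, rfl⟩ := h
  exact ⟨c + c', p, q, by rw [smul_smul, omegaPow_add]⟩

lemma Pauli_mul {P P' : Mat d n} (h : P ∈ Pauli d n) (h' : P' ∈ Pauli d n) :
    P * P' ∈ Pauli d n := by
  obtain ⟨c₁, p₁, q₁, rfl⟩ := h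
  obtain ⟨c₂, p₂, q₂, rfl⟩ := h'
  refine ⟨c₁ + (c₂ + -(p₂ ⬝ᵥ q₁)), p₁ + p₂, q₁ + q₂, ?_⟩
  have hAB : ZP d n p₁ * XQ d n q₁ * (ZP d n p₂ * XQ d n q₂)
      = omegaPow d (-(p₂ ⬝ᵥ q₁)) • (ZP d n (p₁ + p₂) * XQ d n (q₁ + q₂)) := by
    rw [show ZP d n p₁ * XQ d n q₁ * (ZP d n p₂ * XQ d n q₂)
        = ZP d n p₁ * (XQ d n q₁ * ZP d n p₂) * XQ d n q₂ by
      simp only [mul_assoc]]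
    rw [XQ_mul_ZP, mul_smul_comm, smul_mul_assoc]
    congr 1
    rw [show ZP d n p₁ * (ZP d n p₂ * XQ d n q₁) * XQ d n q₂
        = (ZP d n p₁ * ZP d n p₂) * (XQ d n q₁ * XQ d n q₂) by
      simp only [mul_assoc]]
    rw [ZP_mul_ZP, XQ_mul_XQ]
  rw [smul_mul_assoc, mul_smul_comm, hAB, smul_smul, smul_smul,
    ← omegaPow_add, ← omegaPow_add, add_assoc]

lemma ZP_mem_Pauli (p : Fin n → ZMod d) : ZP d n p ∈ Pauli d n :=
  ⟨0, p, 0, by rw [omegaPow_zero, XQ_zero, mul_one, one_smul]⟩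

lemma XQ_mul_quadGate (Φ : Matrix (Fin n) (Fin n) (ZMod d)) (q : Fin n → ZMod d) :
    XQ d n q * quadGate d n Φ =
      quadGate d n Φ * (omegaPow d (q ⬝ᵥ (Φᵀ *ᵥ q)) •
        (ZP d n (-(Φ *ᵥ q + Φᵀ *ᵥ q)) * XQ d n q)) := by
  have hz : ∀ z : Fin n → ZMod d,
      q ⬝ᵥ (Φᵀ *ᵥ q) + ((-(Φ *ᵥ q + Φᵀ *ᵥ q)) ⬝ᵥ (z + q)
        + (z + q) ⬝ᵥ (Φ *ᵥ (z + q))) = z ⬝ᵥ (Φ *ᵥ z) := by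
    intro z
    have h1 : q ⬝ᵥ (Φ *ᵥ z) = (Φᵀ *ᵥ q) ⬝ᵥ z := by
      rw [Matrix.dotProduct_mulVec, Matrix.mulVec_transpose]
    simp only [Matrix.mulVec_add, dotProduct_add, add_dotProduct, neg_dotProduct,
      neg_add_rev]
    rw [h1, dotProduct_comm z (Φ *ᵥ q), dotProduct_comm q (Φ *ᵥ q),
      dotProduct_comm q (Φᵀ *ᵥ q)]
    ring
  ext z' z
  rw [mul_smul_comm]
  simp only [quadGate, XQ, ZP, Matrix.mul_diagonal, Matrix.diagonal_mul,
    Matrix.of_apply, Matrix.smul_apply, smul_eq_mul]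
  by_cases h : z' = z + q
  · subst h
    simp only [if_pos rfl, mul_one, one_mul]
    rw [← hz z, omegaPow_add, omegaPow_add]
    ring
  · simp [h]

lemma quadGate_mul_quadGate (Φ₁ Φ₂ : Matrix (Fin n) (Fin n) (ZMod d)) :
    quadGate d n Φ₁ * quadGate d n Φ₂ = quadGate d n (Φ₁ + Φ₂) := by
  rw [quadGate, quadGate, quadGate, Matrix.diagonal_mul_diagonal]
  congr 1
  funext z
  simp [Matrix.add_mulVec, dotProduct_add, omegaPow_add]

lemma ZP_mul_quadGate (p : Fin n → ZMod d) (Φ : Matrix (Fin n) (Fin n) (ZMod d)) :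
    ZP d n p * quadGate d n Φ = quadGate d n Φ * ZP d n p := by
  rw [ZP, quadGate, Matrix.diagonal_mul_diagonal, Matrix.diagonal_mul_diagonal]
  exact congrArg Matrix.diagonal (mul_comm _ _)

lemma Pauli_comm_quadGate (Φ : Matrix (Fin n) (Fin n) (ZMod d)) {P : Mat d n}
    (h : P ∈ Pauli d n) :
    ∃ P' ∈ Pauli d n, P * quadGate d n Φ = quadGate d n Φ * P' := by
  obtain ⟨c, p, q, rfl⟩ := h
  refine ⟨omegaPow d c • (ZP d n p * (omegaPow d (q ⬝ᵥ (Φᵀ *ᵥ q)) •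
      (ZP d n (-(Φ *ᵥ q + Φᵀ *ᵥ q)) * XQ d n q))), ?_, ?_⟩
  · exact Pauli_smul d n c (Pauli_mul d n (ZP_mem_Pauli d n p)
      (Pauli_smul d n _ (Pauli_mul d n (ZP_mem_Pauli d n _) (XQ_mem_Pauli d n q))))
  · rw [smul_mul_assoc, mul_smul_comm]
    congr 1
    rw [mul_assoc, XQ_mul_quadGate, ← mul_assoc, ZP_mul_quadGate, mul_assoc]

end Aux

/-- The product of two almost diagonal Clifford gates `D_{Φ₁} P₁` and `D_{Φ₂} P₂`
is `D_{Φ₁+Φ₂} P` for some Pauli gate `P`. -/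
theorem stmt6 (d n : ℕ) [NeZero d] (hp : Nat.Prime d) (hodd : Odd d)
    (Φ₁ Φ₂ : Matrix (Fin n) (Fin n) (ZMod d)) (h₁ : Φ₁.IsSymm) (h₂ : Φ₂.IsSymm)
    (P₁ P₂ : Mat d n) (hP₁ : P₁ ∈ Pauli d n) (hP₂ : P₂ ∈ Pauli d n) :
    ∃ P ∈ Pauli d n, (quadGate d n Φ₁ * P₁) * (quadGate d n Φ₂ * P₂)
      = quadGate d n (Φ₁ + Φ₂) * P := by
  obtain ⟨P₁', hP₁', hcomm⟩ := Pauli_comm_quadGate d n Φ₂ hP₁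
  refine ⟨P₁' * P₂, Pauli_mul d n hP₁' hP₂, ?_⟩
  calc quadGate d n Φ₁ * P₁ * (quadGate d n Φ₂ * P₂)
      = quadGate d n Φ₁ * (P₁ * quadGate d n Φ₂) * P₂ := by simp only [mul_assoc]
    _ = quadGate d n Φ₁ * (quadGate d n Φ₂ * P₁') * P₂ := by rw [hcomm]
    _ = (quadGate d n Φ₁ * quadGate d n Φ₂) * (P₁' * P₂) := by simp only [mul_assoc]
    _ = quadGate d n (Φ₁ + Φ₂) * (P₁' * P₂) := by rw [quadGate_mul_quadGate]

end
end
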